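/- With Ω = [[Ω₁, Γ],[Γ†, Ω₂]] on H = H₁ ⊕ H₂, define H₂c = O_Ω(H₁) ⊖ H₁ and H₁c = O_Ω(H₂) ⊖ H₂. Then H₁c ⊕ H₂c = O_Ω(H₁c) = O_Ω(H₂c) = O_Ω(Ran Γ ⊕ Ran Γ†). -/

import Mathlib

open ContinuousLinearMap MeasureTheory

/-- The orbit of a set `S` under an operator `Ω`: the smallest closed `Ω`-invariant
subspace containing `S`. -/
noncomputable def orbit {H : Type*} [NormedAddCommGroup H] [InnerProductSpace ℂ H]
    (Ω : H →L[ℂ] H) (S : Set H) : Submodule ℂ H :=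
  sInf {K : Submodule ℂ H | S ⊆ K ∧ IsClosed (K : Set H) ∧ ∀ x ∈ K, Ω x ∈ K}

variable {H₁ H₂ : Type*} [NormedAddCommGroup H₁] [InnerProductSpace ℂ H₁] [CompleteSpace H₁]
  [NormedAddCommGroup H₂] [InnerProductSpace ℂ H₂] [CompleteSpace H₂]

/-- Inclusion of `H₁` into the Hilbert space direct sum `H₁ ⊕ H₂`. -/
noncomputable def inl' : H₁ →L[ℂ] WithLp 2 (H₁ × H₂) :=
  (WithLp.prodContinuousLinearEquiv 2 ℂ H₁ H₂).symm.toContinuousLinearMap ∘L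
    ContinuousLinearMap.inl ℂ H₁ H₂

/-- Inclusion of `H₂` into the Hilbert space direct sum `H₁ ⊕ H₂`. -/
noncomputable def inr' : H₂ →L[ℂ] WithLp 2 (H₁ × H₂) :=
  (WithLp.prodContinuousLinearEquiv 2 ℂ H₁ H₂).symm.toContinuousLinearMap ∘L
    ContinuousLinearMap.inr ℂ H₁ H₂

/-- The block operator `[[Ω₁, Γ], [Γ†, Ω₂]]` on `H₁ ⊕ H₂`. -/
noncomputable def blockOp (Ω₁ : H₁ →L[ℂ] H₁) (Ω₂ : H₂ →L[ℂ] H₂) (Γ : H₂ →L[ℂ] H₁) :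
    WithLp 2 (H₁ × H₂) →L[ℂ] WithLp 2 (H₁ × H₂) :=
  (WithLp.prodContinuousLinearEquiv 2 ℂ H₁ H₂).symm.toContinuousLinearMap ∘L
    ((Ω₁ ∘L ContinuousLinearMap.fst ℂ H₁ H₂ + Γ ∘L ContinuousLinearMap.snd ℂ H₁ H₂).prod
      ((ContinuousLinearMap.adjoint Γ) ∘L ContinuousLinearMap.fst ℂ H₁ H₂ +
        Ω₂ ∘L ContinuousLinearMap.snd ℂ H₁ H₂)) ∘L
    (WithLp.prodContinuousLinearEquiv 2 ℂ H₁ H₂).toContinuousLinearMap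

/-- `H₁` as a subspace of `H₁ ⊕ H₂`. -/
noncomputable def sub1 : Submodule ℂ (WithLp 2 (H₁ × H₂)) := LinearMap.range ((inl' : H₁ →L[ℂ] WithLp 2 (H₁ × H₂)) : H₁ →ₗ[ℂ] WithLp 2 (H₁ × H₂))

/-- `H₂` as a subspace of `H₁ ⊕ H₂`. -/
noncomputable def sub2 : Submodule ℂ (WithLp 2 (H₁ × H₂)) := LinearMap.range ((inr' : H₂ →L[ℂ] WithLp 2 (H₁ × H₂)) : H₂ →ₗ[ℂ] WithLp 2 (H₁ × H₂))

/-!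
Write `K₁ = O_{Ω₁}(Ran Γ) ⊆ H₁` and `K₂ = O_{Ω₂}(Ran Γ†) ⊆ H₂`. The subspace `K₁ ⊕ K₂` is closed
and `Ω`-invariant, and a closed `Ω`-invariant subspace containing `K₁ ⊕ 0` also contains `0 ⊕ K₂`
(and conversely): since `K₁ᗮ ⊆ (Ran Γ)ᗮ = ker Γ†`, every `Γ† x` equals some `Γ† u` with `u ∈ K₁`,
and `(0, Γ† u) = Ω (u, 0) - (Ω₁ u, 0)`. Hence `O_Ω(H₁) = H₁ ⊕ K₂` and `O_Ω(H₂) = K₁ ⊕ H₂`, so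
`H₂c = 0 ⊕ K₂` and `H₁c = K₁ ⊕ 0`, and each of the three orbits in question is `K₁ ⊕ K₂`.
-/

open Set

section Orbit

variable {H : Type*} [NormedAddCommGroup H] [InnerProductSpace ℂ H] {Ω : H →L[ℂ] H} {S : Set H}

lemma orbit_le {K : Submodule ℂ H} (hSK : S ⊆ K) (hK : IsClosed (K : Set H))
    (hΩK : MapsTo Ω K K) : orbit Ω S ≤ K :=
  sInf_le ⟨hSK, hK, hΩK⟩

lemma subset_orbit : S ⊆ orbit Ω S :=
  fun _ hx => Submodule.mem_sInf.2 fun _ hK => hK.1 hx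

lemma isClosed_orbit : IsClosed (orbit Ω S : Set H) := by
  rw [orbit, Submodule.coe_sInf]
  exact isClosed_biInter fun _ hK => hK.2.1

lemma mapsTo_orbit : MapsTo Ω (orbit Ω S) (orbit Ω S) :=
  fun _ hx => Submodule.mem_sInf.2 fun K hK => hK.2.2 _ (Submodule.mem_sInf.1 hx K hK)

end Orbit

lemma ContinuousLinearMap.image_eq_range_of_range_adjoint_subset {𝕜 E F : Type*} [RCLike 𝕜]
    [NormedAddCommGroup E] [InnerProductSpace 𝕜 E] [CompleteSpace E]
    [NormedAddCommGroup F] [InnerProductSpace 𝕜 F] [CompleteSpace F]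
    (B : E →L[𝕜] F) {K : Submodule 𝕜 E} [K.HasOrthogonalProjection]
    (hBK : range (adjoint B) ⊆ K) : B '' K = range B := by
  refine (image_subset_range _ _).antisymm ?_
  rintro _ ⟨x, rfl⟩
  obtain ⟨u, hu, v, hv, rfl⟩ := K.exists_add_mem_mem_orthogonal x
  have hBv : B v = 0 := inner_self_eq_zero.1 <| by
    rw [← adjoint_inner_left]
    exact K.inner_right_of_mem_orthogonal (hBK (mem_range_self _)) hv
  exact ⟨u, hu, by simp [hBv]⟩

section Compression

/- `i` and `j` embed `E` and `F` into `H`, and the hypothesis `Ω (i a) = i (A a) + j (B a)` says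
that `A` and `B` are the blocks of `Ω` in the column of `E`. -/

variable {E F H : Type*} [NormedAddCommGroup E] [InnerProductSpace ℂ E]
  [NormedAddCommGroup F] [InnerProductSpace ℂ F] [NormedAddCommGroup H] [InnerProductSpace ℂ H]
  {Ω : H →L[ℂ] H} {i : E →L[ℂ] H} {j : F →L[ℂ] H} {A : E →L[ℂ] E} {B : E →L[ℂ] F}
  {N : Submodule ℂ H}

lemma mapsTo_orbit_of_mapsTo (hΩ : ∀ a, Ω (i a) = i (A a) + j (B a)) (hN : IsClosed (N : Set H))
    (hΩN : MapsTo Ω N N) {S : Set E} (hS : MapsTo i S N) (hB : MapsTo j (range B) N) :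
    MapsTo i (orbit A S) N := by
  refine orbit_le (K := N.comap i.toLinearMap) hS (hN.preimage i.continuous) fun a ha => ?_
  have : i (A a) = Ω (i a) - j (B a) := by rw [hΩ]; abel
  simpa [this] using N.sub_mem (hΩN ha) (hB (mem_range_self a))

lemma mapsTo_range_of_mapsTo [CompleteSpace E] [CompleteSpace F]
    (hΩ : ∀ a, Ω (i a) = i (A a) + j (B a)) (hΩN : MapsTo Ω N N)
    {K : Submodule ℂ E} [K.HasOrthogonalProjection]
    (hBK : range (adjoint B) ⊆ K) (hAK : MapsTo A K K) (hKN : MapsTo i K N) :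
    MapsTo j (range B) N := by
  rintro _ ⟨x, rfl⟩
  obtain ⟨u, hu, hux⟩ : B x ∈ B '' K := by
    rw [B.image_eq_range_of_range_adjoint_subset hBK]; exact mem_range_self x
  have : j (B u) = Ω (i u) - i (A u) := by rw [hΩ]; abel
  simpa [← hux, this] using N.sub_mem (hΩN (hKN hu)) (hKN (hAK hu))

end Compression

section ProdL2

variable {𝕜 E F : Type*} [RCLike 𝕜] [NormedAddCommGroup E] [InnerProductSpace 𝕜 E]
  [NormedAddCommGroup F] [InnerProductSpace 𝕜 F]

def prodL2 (A : Submodule 𝕜 E) (B : Submodule 𝕜 F) : Submodule 𝕜 (WithLp 2 (E × F)) :=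
  (A.prod B).comap (WithLp.linearEquiv 2 𝕜 (E × F)).toLinearMap

variable {A A' : Submodule 𝕜 E} {B B' : Submodule 𝕜 F}

@[simp]
lemma mem_prodL2 {z : WithLp 2 (E × F)} : z ∈ prodL2 A B ↔ z.fst ∈ A ∧ z.snd ∈ B := Iff.rfl

lemma prodL2_mono (hA : A ≤ A') (hB : B ≤ B') : prodL2 A B ≤ prodL2 A' B' :=
  fun _ hz => ⟨hA hz.1, hB hz.2⟩

lemma prodL2_inf_prodL2 : prodL2 A B ⊓ prodL2 A' B' = prodL2 (A ⊓ A') (B ⊓ B') := by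
  ext; simp [and_and_and_comm]

lemma prodL2_sup_prodL2 : prodL2 A B ⊔ prodL2 A' B' = prodL2 (A ⊔ A') (B ⊔ B') := by
  simp only [prodL2, Submodule.comap_equiv_eq_map_symm, ← Submodule.map_sup,
    Submodule.prod_sup_prod]

lemma isClosed_prodL2 (hA : IsClosed (A : Set E)) (hB : IsClosed (B : Set F)) :
    IsClosed (prodL2 A B : Set (WithLp 2 (E × F))) :=
  (hA.preimage (WithLp.fstL 2 𝕜 E F).continuous).inter
    (hB.preimage (WithLp.sndL 2 𝕜 E F).continuous)

lemma orthogonal_prodL2 : (prodL2 A B)ᗮ = prodL2 Aᗮ Bᗮ := by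
  ext z
  simp only [Submodule.mem_orthogonal, mem_prodL2]
  constructor
  · intro h
    refine ⟨fun a ha => ?_, fun b hb => ?_⟩
    · simpa using h (WithLp.toLp 2 (a, 0)) (by simpa using ha)
    · simpa using h (WithLp.toLp 2 (0, b)) (by simpa using hb)
  · rintro ⟨hA, hB⟩ w hw
    simp [hA _ hw.1, hB _ hw.2]

end ProdL2

section Inclusions

variable {E F : Type*} [NormedAddCommGroup E] [InnerProductSpace ℂ E]
  [NormedAddCommGroup F] [InnerProductSpace ℂ F] {A : Submodule ℂ E} {B : Submodule ℂ F}

@[simp] lemma fst_inl' (a : E) : (inl' a : WithLp 2 (E × F)).fst = a := rfl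
@[simp] lemma snd_inl' (a : E) : (inl' a : WithLp 2 (E × F)).snd = 0 := rfl
@[simp] lemma fst_inr' (b : F) : (inr' b : WithLp 2 (E × F)).fst = 0 := rfl
@[simp] lemma snd_inr' (b : F) : (inr' b : WithLp 2 (E × F)).snd = b := rfl

lemma inl'_fst_add_inr'_snd (z : WithLp 2 (E × F)) : inl' z.fst + inr' z.snd = z := by
  apply WithLp.ofLp_injective; ext <;> simp

lemma prodL2_le_iff {N : Submodule ℂ (WithLp 2 (E × F))} :
    prodL2 A B ≤ N ↔ MapsTo inl' (A : Set E) (N : Set (WithLp 2 (E × F))) ∧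
      MapsTo inr' (B : Set F) (N : Set (WithLp 2 (E × F))) := by
  refine ⟨fun h => ⟨fun a ha => h (by simpa), fun b hb => h (by simpa)⟩, ?_⟩
  rintro ⟨hA, hB⟩ z ⟨hz₁, hz₂⟩
  rw [← inl'_fst_add_inr'_snd z]
  exact N.add_mem (hA hz₁) (hB hz₂)

lemma sub1_eq_prodL2 : (sub1 : Submodule ℂ (WithLp 2 (E × F))) = prodL2 ⊤ ⊥ := by
  ext z
  refine ⟨?_, fun hz => ⟨z.fst, ?_⟩⟩
  · rintro ⟨a, rfl⟩; simp
  · rw [← inl'_fst_add_inr'_snd z]; simp_all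

lemma sub2_eq_prodL2 : (sub2 : Submodule ℂ (WithLp 2 (E × F))) = prodL2 ⊥ ⊤ := by
  ext z
  refine ⟨?_, fun hz => ⟨z.snd, ?_⟩⟩
  · rintro ⟨b, rfl⟩; simp
  · rw [← inl'_fst_add_inr'_snd z]; simp_all

end Inclusions

section BlockOperator

variable (Ω₁ : H₁ →L[ℂ] H₁) (Ω₂ : H₂ →L[ℂ] H₂) (Γ : H₂ →L[ℂ] H₁)

lemma blockOp_inl' (a : H₁) : blockOp Ω₁ Ω₂ Γ (inl' a) = inl' (Ω₁ a) + inr' (adjoint Γ a) := by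
  apply WithLp.ofLp_injective; ext <;> simp [blockOp]

lemma blockOp_inr' (b : H₂) : blockOp Ω₁ Ω₂ Γ (inr' b) = inr' (Ω₂ b) + inl' (Γ b) := by
  apply WithLp.ofLp_injective; ext <;> simp [blockOp]

variable {Ω₁ Ω₂ Γ}

lemma mapsTo_blockOp_prodL2 {A : Submodule ℂ H₁} {B : Submodule ℂ H₂} (hΩ₁ : MapsTo Ω₁ A A)
    (hΓ : MapsTo Γ B A) (hΓ' : MapsTo (adjoint Γ) A B) (hΩ₂ : MapsTo Ω₂ B B) :
    MapsTo (blockOp Ω₁ Ω₂ Γ) (prodL2 A B) (prodL2 A B) :=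
  fun _ hz => ⟨A.add_mem (hΩ₁ hz.1) (hΓ hz.2), B.add_mem (hΓ' hz.1) (hΩ₂ hz.2)⟩

variable {N : Submodule ℂ (WithLp 2 (H₁ × H₂))}

lemma mapsTo_inr'_orbit (hN : IsClosed (N : Set (WithLp 2 (H₁ × H₂))))
    (hΩN : MapsTo (blockOp Ω₁ Ω₂ Γ) N N)
    (h₁ : MapsTo inl' (orbit Ω₁ (range Γ) : Set H₁) (N : Set (WithLp 2 (H₁ × H₂)))) :
    MapsTo inr' (orbit Ω₂ (range (adjoint Γ)) : Set H₂) (N : Set (WithLp 2 (H₁ × H₂))) := by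
  have : CompleteSpace (orbit Ω₁ (range Γ)) := isClosed_orbit.completeSpace_coe
  have hrange : MapsTo inr' (range (adjoint Γ)) (N : Set (WithLp 2 (H₁ × H₂))) :=
    mapsTo_range_of_mapsTo (blockOp_inl' Ω₁ Ω₂ Γ) hΩN
      (by rw [adjoint_adjoint]; exact subset_orbit) mapsTo_orbit h₁
  exact mapsTo_orbit_of_mapsTo (blockOp_inr' Ω₁ Ω₂ Γ) hN hΩN hrange (h₁.mono_left subset_orbit)

lemma mapsTo_inl'_orbit (hN : IsClosed (N : Set (WithLp 2 (H₁ × H₂))))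
    (hΩN : MapsTo (blockOp Ω₁ Ω₂ Γ) N N)
    (h₂ : MapsTo inr' (orbit Ω₂ (range (adjoint Γ)) : Set H₂) (N : Set (WithLp 2 (H₁ × H₂)))) :
    MapsTo inl' (orbit Ω₁ (range Γ) : Set H₁) (N : Set (WithLp 2 (H₁ × H₂))) := by
  have : CompleteSpace (orbit Ω₂ (range (adjoint Γ))) := isClosed_orbit.completeSpace_coe
  have hrange : MapsTo inl' (range Γ) (N : Set (WithLp 2 (H₁ × H₂))) :=
    mapsTo_range_of_mapsTo (blockOp_inr' Ω₁ Ω₂ Γ) hΩN subset_orbit mapsTo_orbit h₂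
  exact mapsTo_orbit_of_mapsTo (blockOp_inl' Ω₁ Ω₂ Γ) hN hΩN hrange (h₂.mono_left subset_orbit)

variable {S : Set (WithLp 2 (H₁ × H₂))}

lemma orbit_blockOp_eq_prodL2_left {A : Submodule ℂ H₁} (hA : IsClosed (A : Set H₁))
    (hΩ₁A : MapsTo Ω₁ A A) (hΓA : range Γ ⊆ A)
    (hS : S ⊆ prodL2 A (orbit Ω₂ (range (adjoint Γ))))
    (hAS : MapsTo inl' (A : Set H₁) (orbit (blockOp Ω₁ Ω₂ Γ) S : Set (WithLp 2 (H₁ × H₂)))) :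
    orbit (blockOp Ω₁ Ω₂ Γ) S = prodL2 A (orbit Ω₂ (range (adjoint Γ))) := by
  refine le_antisymm (orbit_le hS (isClosed_prodL2 hA isClosed_orbit) ?_)
    (prodL2_le_iff.2 ⟨hAS, ?_⟩)
  · exact mapsTo_blockOp_prodL2 hΩ₁A (fun b _ => hΓA (mem_range_self b))
      (fun a _ => subset_orbit (mem_range_self a)) mapsTo_orbit
  · exact mapsTo_inr'_orbit isClosed_orbit mapsTo_orbit (hAS.mono_left (orbit_le hΓA hA hΩ₁A))

lemma orbit_blockOp_eq_prodL2_right {B : Submodule ℂ H₂} (hB : IsClosed (B : Set H₂))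
    (hΩ₂B : MapsTo Ω₂ B B) (hΓB : range (adjoint Γ) ⊆ B)
    (hS : S ⊆ prodL2 (orbit Ω₁ (range Γ)) B)
    (hBS : MapsTo inr' (B : Set H₂) (orbit (blockOp Ω₁ Ω₂ Γ) S : Set (WithLp 2 (H₁ × H₂)))) :
    orbit (blockOp Ω₁ Ω₂ Γ) S = prodL2 (orbit Ω₁ (range Γ)) B := by
  refine le_antisymm (orbit_le hS (isClosed_prodL2 isClosed_orbit hB) ?_)
    (prodL2_le_iff.2 ⟨?_, hBS⟩)
  · exact mapsTo_blockOp_prodL2 mapsTo_orbit (fun b _ => subset_orbit (mem_range_self b))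
      (fun a _ => hΓB (mem_range_self a)) hΩ₂B
  · exact mapsTo_inl'_orbit isClosed_orbit mapsTo_orbit (hBS.mono_left (orbit_le hΓB hB hΩ₂B))

end BlockOperator

theorem system_reconstruction_general
    (Ω₁ : H₁ →L[ℂ] H₁) (Ω₂ : H₂ →L[ℂ] H₂) (Γ : H₂ →L[ℂ] H₁)
    (Ω : WithLp 2 (H₁ × H₂) →L[ℂ] WithLp 2 (H₁ × H₂)) (hΩ : Ω = blockOp Ω₁ Ω₂ Γ)
    (H2c H1c : Submodule ℂ (WithLp 2 (H₁ × H₂)))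
    (hH2c : H2c = orbit Ω (sub1 : Submodule ℂ (WithLp 2 (H₁ × H₂))) ⊓
      (sub1 : Submodule ℂ (WithLp 2 (H₁ × H₂)))ᗮ)
    (hH1c : H1c = orbit Ω (sub2 : Submodule ℂ (WithLp 2 (H₁ × H₂))) ⊓
      (sub2 : Submodule ℂ (WithLp 2 (H₁ × H₂)))ᗮ) :
    H1c ⊔ H2c = orbit Ω (H1c : Set (WithLp 2 (H₁ × H₂))) ∧
    H1c ⊔ H2c = orbit Ω (H2c : Set (WithLp 2 (H₁ × H₂))) ∧
    H1c ⊔ H2c = orbit Ω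
      (inl' '' Set.range Γ ∪ inr' '' Set.range (ContinuousLinearMap.adjoint Γ)) := by
  subst hΩ
  set K₁ := orbit Ω₁ (range Γ)
  set K₂ := orbit Ω₂ (range (adjoint Γ))
  have hsub1 :
      orbit (blockOp Ω₁ Ω₂ Γ) (sub1 : Submodule ℂ (WithLp 2 (H₁ × H₂))) = prodL2 ⊤ K₂ :=
    orbit_blockOp_eq_prodL2_left (by simp) (mapsTo_univ _ _) (subset_univ _)
      (by rw [sub1_eq_prodL2]; exact prodL2_mono le_rfl bot_le) fun a _ => subset_orbit ⟨a, rfl⟩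
  have hsub2 :
      orbit (blockOp Ω₁ Ω₂ Γ) (sub2 : Submodule ℂ (WithLp 2 (H₁ × H₂))) = prodL2 K₁ ⊤ :=
    orbit_blockOp_eq_prodL2_right (by simp) (mapsTo_univ _ _) (subset_univ _)
      (by rw [sub2_eq_prodL2]; exact prodL2_mono bot_le le_rfl) fun b _ => subset_orbit ⟨b, rfl⟩
  have hH2c' : H2c = prodL2 ⊥ K₂ := by
    rw [hH2c, hsub1, sub1_eq_prodL2, orthogonal_prodL2, prodL2_inf_prodL2]; simp
  have hH1c' : H1c = prodL2 K₁ ⊥ := by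
    rw [hH1c, hsub2, sub2_eq_prodL2, orthogonal_prodL2, prodL2_inf_prodL2]; simp
  have hsup : H1c ⊔ H2c = prodL2 K₁ K₂ := by
    rw [hH1c', hH2c', prodL2_sup_prodL2, sup_bot_eq, bot_sup_eq]
  refine ⟨?_, ?_, ?_⟩ <;> rw [hsup]
  · refine (orbit_blockOp_eq_prodL2_left isClosed_orbit mapsTo_orbit subset_orbit
      (SetLike.coe_subset_coe.2 (le_sup_left.trans hsup.le)) fun a ha => subset_orbit ?_).symm
    rw [hH1c']; simpa using ha
  · refine (orbit_blockOp_eq_prodL2_right isClosed_orbit mapsTo_orbit subset_orbit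
      (SetLike.coe_subset_coe.2 (le_sup_right.trans hsup.le)) fun b hb => subset_orbit ?_).symm
    rw [hH2c']; simpa using hb
  · refine (orbit_blockOp_eq_prodL2_left isClosed_orbit mapsTo_orbit subset_orbit ?_
      (mapsTo_orbit_of_mapsTo (blockOp_inl' Ω₁ Ω₂ Γ) isClosed_orbit mapsTo_orbit
        (fun y hy => subset_orbit (Or.inl ⟨y, hy, rfl⟩))
        (fun x hx => subset_orbit (Or.inr ⟨x, hx, rfl⟩)))).symm
    exact union_subset (image_subset_iff.2 fun _ hy => by simpa using subset_orbit hy)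
      (image_subset_iff.2 fun _ hx => by simpa using subset_orbit hx)

/-- system reconstruction, part one: with `H₂c = O_Ω(H₁) ⊖ H₁` and
`H₁c = O_Ω(H₂) ⊖ H₂`, one has
`H₁c ⊕ H₂c = O_Ω(H₁c) = O_Ω(H₂c) = O_Ω(Ran Γ ⊕ Ran Γ†)`. -/
theorem system_reconstruction
    (Ω₁ : H₁ →L[ℂ] H₁) (Ω₂ : H₂ →L[ℂ] H₂) (Γ : H₂ →L[ℂ] H₁)
    (hΩ₁ : IsSelfAdjoint Ω₁) (hΩ₂ : IsSelfAdjoint Ω₂)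
    (Ω : WithLp 2 (H₁ × H₂) →L[ℂ] WithLp 2 (H₁ × H₂)) (hΩ : Ω = blockOp Ω₁ Ω₂ Γ)
    (H2c H1c : Submodule ℂ (WithLp 2 (H₁ × H₂)))
    (hH2c : H2c = orbit Ω (sub1 : Submodule ℂ (WithLp 2 (H₁ × H₂))) ⊓
      (sub1 : Submodule ℂ (WithLp 2 (H₁ × H₂)))ᗮ)
    (hH1c : H1c = orbit Ω (sub2 : Submodule ℂ (WithLp 2 (H₁ × H₂))) ⊓
      (sub2 : Submodule ℂ (WithLp 2 (H₁ × H₂)))ᗮ) :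
    H1c ⊔ H2c = orbit Ω (H1c : Set (WithLp 2 (H₁ × H₂))) ∧
    H1c ⊔ H2c = orbit Ω (H2c : Set (WithLp 2 (H₁ × H₂))) ∧
    H1c ⊔ H2c = orbit Ω
      (inl' '' Set.range Γ ∪ inr' '' Set.range (ContinuousLinearMap.adjoint Γ)) :=
  system_reconstruction_general Ω₁ Ω₂ Γ Ω hΩ H2c H1c hH2c hH1c
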